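/- Let {v, u} be a pair of vertices in a hyperedge S with intersecting intervals I_v ∩ I_u ≠ ∅, where v is leftmost in S (has minimum lower limit). Then {v,u} is a witness set: every query set feasible for orienting S contains v or u. -/

import Mathlib

open Finset

/-- Lower endpoint of vertex `v`'s interval after querying the set `Q`. -/
def qlo {V : Type*} [DecidableEq V] (L w : V → ℝ) (Q : Finset V) (v : V) : ℝ :=
  if v ∈ Q then w v else L v

/-- Upper endpoint of vertex `v`'s interval after querying the set `Q`. -/
def qhi {V : Type*} [DecidableEq V] (U w : V → ℝ) (Q : Finset V) (v : V) : ℝ :=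
  if v ∈ Q then w v else U v

/-- The query set `Q` suffices to orient the hyperedge `S`: some vertex of `S`
has its (updated) interval weakly below all other (updated) intervals of `S`. -/
def Solves {V : Type*} [DecidableEq V] (L U w : V → ℝ) (Q : Finset V) (S : Finset V) : Prop :=
  ∃ m ∈ S, ∀ u ∈ S, u ≠ m → qhi U w Q m ≤ qlo L w Q u

/- If neither `v` nor `u` is queried, a certified minimum of `S` must be the leftmost vertex `v`
(any other vertex still has its upper endpoint above `L v`), and then `U v ≤ L u`, which the
weight `w u`, lying in both open intervals, rules out. -/

section Queries

variable {V : Type*} [DecidableEq V] {L U w : V → ℝ} {Q : Finset V} {x : V}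

theorem lt_qhi_of_mem_Ioo (hx : w x ∈ Set.Ioo (L x) (U x)) : L x < qhi U w Q x := by
  unfold qhi
  split_ifs
  exacts [hx.1, hx.1.trans hx.2]

theorem qlo_of_notMem (hx : x ∉ Q) : qlo L w Q x = L x := if_neg hx

theorem qhi_of_notMem (hx : x ∉ Q) : qhi U w Q x = U x := if_neg hx

theorem eq_of_certifies_of_leftmost_notMem {S : Finset V} {m v : V}
    (hw : ∀ x, w x ∈ Set.Ioo (L x) (U x)) (hmS : m ∈ S) (hvS : v ∈ S) (hvQ : v ∉ Q)
    (hleft : ∀ x ∈ S, L v ≤ L x) (hm : ∀ y ∈ S, y ≠ m → qhi U w Q m ≤ qlo L w Q y) :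
    m = v := by
  by_contra hmv
  have hcert := hm v hvS (Ne.symm hmv)
  rw [qlo_of_notMem hvQ] at hcert
  linarith [lt_qhi_of_mem_Ioo (Q := Q) (hw m), hleft m hmS]

end Queries

theorem stmt13_general {V : Type*} [DecidableEq V] (L U w : V → ℝ)
    (hw : ∀ x : V, w x ∈ Set.Ioo (L x) (U x))
    (S : Finset V) (v u : V) (hvS : v ∈ S) (huS : u ∈ S) (hne : v ≠ u)
    (hleft : ∀ x ∈ S, L v ≤ L x)
    (hwu : w u ∈ Set.Ioo (L v) (U v) ∩ Set.Ioo (L u) (U u)) :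
    ∀ Q : Finset V, Solves L U w Q S → v ∈ Q ∨ u ∈ Q := by
  rintro Q ⟨m, hmS, hm⟩
  by_contra! ⟨hvQ, huQ⟩
  obtain rfl := eq_of_certifies_of_leftmost_notMem hw hmS hvS hvQ hleft hm
  have hcert := hm u huS hne.symm
  rw [qhi_of_notMem hvQ, qlo_of_notMem huQ] at hcert
  linarith [hwu.1.2, hwu.2.1]

theorem stmt13 {V : Type*} [DecidableEq V] (L U w : V → ℝ)
    (hw : ∀ x : V, w x ∈ Set.Ioo (L x) (U x))
    (S : Finset V) (v u : V) (hvS : v ∈ S) (huS : u ∈ S) (hne : v ≠ u)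
    (hleft : ∀ x ∈ S, L v ≤ L x)
    (hint : (Set.Ioo (L v) (U v) ∩ Set.Ioo (L u) (U u)).Nonempty)
    (hwu : w u ∈ Set.Ioo (L v) (U v) ∩ Set.Ioo (L u) (U u)) :
    ∀ Q : Finset V, Solves L U w Q S → v ∈ Q ∨ u ∈ Q :=
  stmt13_general L U w hw S v u hvS huS hne hleft hwu
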